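/- Positivity of the principal eigenvalue implies the weak maximum principle: let 𝓛 be a uniformly elliptic second-order linear operator with bounded continuous coefficients on a bounded domain Ω ⊂ ℝ². If λ₁(𝓛,Ω) > 0, then every w ∈ C²(Ω) ∩ C(closure(Ω)) with 𝓛w ≥ 0 in Ω and w ≤ 0 on ∂Ω satisfies w ≤ 0 in Ω. -/

import Mathlib

/-!
Take `λ > 0` and `φ > 0` with `(𝓛 + λ)φ ≤ 0`, and a compact `K ⊆ Ω` such that `Ω \ K` has small
measure. For `γ ≥ 0` the function `w - γφ` is a subsolution, so if `w ≤ γφ` on `K`, the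
Aleksandrov–Bakelman–Pucci estimate on the thin set `Ω \ K` gives `w ≤ γφ` on all of `Ω`. If
`w / φ` had a positive maximum `γ` on `K`, then `w - γφ` would attain the interior maximum `0`,
where `𝓛(w - γφ) ≥ γλφ > 0` contradicts ellipticity. Hence `w ≤ 0` on `K`, and so on `Ω`.

For the ABP estimate, let the subsolution `v` have a positive maximum `M`. Every slope `p` with
`|p| ≲ M` is the gradient of `v` at a maximum point of `v - p·x`, where `D²v ≤ 0`; there the
equation bounds `det D²v` by `M²`, so the area formula bounds the measure of the ball of slopes
by `M² |Ω \ K|`, which is impossible when `|Ω \ K|` is small.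
-/

open Set MeasureTheory

/-- Partial derivative in the first (horizontal) variable. -/
noncomputable def pdx (f : ℝ × ℝ → ℝ) (z : ℝ × ℝ) : ℝ := fderiv ℝ f z (1, 0)

/-- Partial derivative in the second (vertical) variable. -/
noncomputable def pdy (f : ℝ × ℝ → ℝ) (z : ℝ × ℝ) : ℝ := fderiv ℝ f z (0, 1)

/-- The general second-order linear differential operator
`𝓛φ = Σ aᵢⱼ ∂ᵢ∂ⱼ φ + Σ bᵢ ∂ᵢ φ + c₀ φ`. -/
noncomputable def Lop (a11 a12 a21 a22 b1 b2 c0 : ℝ × ℝ → ℝ)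
    (φ : ℝ × ℝ → ℝ) (z : ℝ × ℝ) : ℝ :=
  a11 z * pdx (pdx φ) z + a12 z * pdx (pdy φ) z + a21 z * pdy (pdx φ) z
    + a22 z * pdy (pdy φ) z + b1 z * pdx φ z + b2 z * pdy φ z + c0 z * φ z

/-- The principal eigenvalue of an operator `T` on a domain `Ω`:
`λ₁ = sup {λ : ∃ φ > 0 in Ω with (𝓛 + λ)φ ≤ 0 in Ω}`. -/
noncomputable def lam1 (T : (ℝ × ℝ → ℝ) → ℝ × ℝ → ℝ) (Ω : Set (ℝ × ℝ)) : ℝ :=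
  sSup {lam : ℝ | ∃ φ : ℝ × ℝ → ℝ, ContDiffOn ℝ 2 φ Ω ∧ (∀ z ∈ Ω, 0 < φ z) ∧
    ∀ z ∈ Ω, T φ z + lam * φ z ≤ 0}

open Filter Topology

theorem IsLocalMax.deriv_deriv_nonpos {f : ℝ → ℝ} {x₀ : ℝ} (hmax : IsLocalMax f x₀)
    (hc : ContinuousAt f x₀) : deriv (deriv f) x₀ ≤ 0 := by
  by_contra! hpos
  -- then `x₀` is also a local minimum, so `f` is locally constant near `x₀`
  have hmin := isLocalMin_of_deriv_deriv_pos hpos hmax.deriv_eq_zero hc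
  have hconst : f =ᶠ[𝓝 x₀] fun _ => f x₀ := by
    filter_upwards [hmax, hmin] with x h₁ h₂ using le_antisymm h₁ h₂
  have hderiv : deriv f =ᶠ[𝓝 x₀] fun _ => 0 := by
    simpa using hconst.deriv
  simp [hderiv.deriv_eq] at hpos

section SecondDerivative

variable {E : Type*} [NormedAddCommGroup E] [NormedSpace ℝ E] {f g : E → ℝ} {z : E}

theorem fderiv_fderiv_apply (hf : DifferentiableAt ℝ (fderiv ℝ f) z) (u ξ : E) :
    fderiv ℝ (fun y => fderiv ℝ f y u) z ξ = fderiv ℝ (fderiv ℝ f) z ξ u := by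
  simp [fderiv_clm_apply hf (differentiableAt_const u)]

theorem ContDiffAt.differentiableAt_fderiv (hf : ContDiffAt ℝ 2 f z) :
    DifferentiableAt ℝ (fderiv ℝ f) z :=
  (hf.fderiv_right (m := 1) le_rfl).differentiableAt one_ne_zero

theorem IsLocalMax.fderiv_fderiv_apply_self_nonpos (hmax : IsLocalMax f z)
    (hf : ContDiffAt ℝ 2 f z) (ξ : E) : fderiv ℝ (fderiv ℝ f) z ξ ξ ≤ 0 := by
  have hline : Continuous fun t : ℝ => z + t • ξ := by fun_prop
  have hline0 : Tendsto (fun t : ℝ => z + t • ξ) (𝓝 0) (𝓝 z) := by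
    simpa using hline.tendsto 0
  have hdiff : ∀ᶠ y in 𝓝 z, DifferentiableAt ℝ f y :=
    (hf.eventually (by simp)).mono fun y hy => hy.differentiableAt two_ne_zero
  have hderiv : deriv (fun t : ℝ => f (z + t • ξ)) =ᶠ[𝓝 0]
      fun t => fderiv ℝ f (z + t • ξ) ξ := by
    filter_upwards [hline0.eventually hdiff] with t ht
    exact (ht.hasFDerivAt.comp_hasDerivAt t
      (((hasDerivAt_id t).smul_const ξ).const_add z)).deriv.trans (by simp)
  have hderiv2 : HasDerivAt (fun t : ℝ => fderiv ℝ f (z + t • ξ) ξ)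
      (fderiv ℝ (fderiv ℝ f) z ξ ξ) 0 :=
    (hf.differentiableAt_fderiv.hasFDerivAt.comp_hasDerivAt_of_eq 0
      (((hasDerivAt_id (0 : ℝ)).smul_const ξ).const_add z) (by simp)).clm_apply
      (hasDerivAt_const 0 ξ) |>.congr_deriv (by simp)
  have hmax' : IsLocalMax (fun t : ℝ => f (z + t • ξ)) 0 := by
    filter_upwards [hline0.eventually hmax] with t ht
    simpa using ht
  simpa [hderiv.deriv_eq, hderiv2.deriv] using
    hmax'.deriv_deriv_nonpos (hf.continuousAt.comp_of_eq hline.continuousAt (by simp))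

theorem fderiv_apply_sub (hf : DifferentiableAt ℝ f z) (hg : DifferentiableAt ℝ g z) (u : E) :
    fderiv ℝ (fun x => f x - g x) z u = fderiv ℝ f z u - fderiv ℝ g z u := by
  rw [fderiv_fun_sub hf hg]; rfl

theorem fderiv_fderiv_apply_sub (hf : ContDiffAt ℝ 2 f z) (hg : ContDiffAt ℝ 2 g z) (u ξ : E) :
    fderiv ℝ (fun y => fderiv ℝ (fun x => f x - g x) y u) z ξ
      = fderiv ℝ (fun y => fderiv ℝ f y u) z ξ - fderiv ℝ (fun y => fderiv ℝ g y u) z ξ := by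
  have hev : (fun y => fderiv ℝ (fun x => f x - g x) y u)
      =ᶠ[𝓝 z] fun y => fderiv ℝ f y u - fderiv ℝ g y u := by
    filter_upwards [hf.eventually (by simp), hg.eventually (by simp)] with y hfy hgy
    exact fderiv_apply_sub (hfy.differentiableAt two_ne_zero) (hgy.differentiableAt two_ne_zero) u
  rw [hev.fderiv_eq,
    fderiv_apply_sub (hf.differentiableAt_fderiv.clm_apply (differentiableAt_const u))
      (hg.differentiableAt_fderiv.clm_apply (differentiableAt_const u))]

end SecondDerivative

theorem sq_le_mul_of_forall_quadratic_nonpos {x y z : ℝ}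
    (h : ∀ s t : ℝ, x * s ^ 2 + 2 * y * s * t + z * t ^ 2 ≤ 0) : y ^ 2 ≤ x * z := by
  by_contra! hlt
  have h₁ := h 1 0
  have h₂ := h 0 1
  have h₃ := h z (-y)
  have h₄ := h (-y) x
  have hz : z = 0 := by nlinarith
  have hx : x = 0 := by nlinarith
  have h₅ := h 1 1
  have h₆ := h 1 (-1)
  nlinarith

theorem IsCompact.exists_isMaxOn_of_le {X α : Type*} [TopologicalSpace X] [LinearOrder α]
    [TopologicalSpace α] [ClosedIciTopology α] {S D : Set X} {f : X → α} {z₀ : X}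
    (hS : IsCompact S) (hf : ContinuousOn f S) (hz₀ : z₀ ∈ S) (hout : ∀ z ∈ D \ S, f z ≤ f z₀) :
    ∃ zm ∈ S, IsMaxOn f D zm := by
  obtain ⟨zm, hzm, hmax⟩ := hS.exists_isMaxOn ⟨z₀, hz₀⟩ hf
  refine ⟨zm, hzm, fun z hz => ?_⟩
  by_cases hzS : z ∈ S
  · exact hmax hzS
  · exact (hout z ⟨hz, hzS⟩).trans (hmax hz₀)

theorem nonpos_of_forall_lt_mul {X : Type*} [TopologicalSpace X] {K : Set X} (hK : IsCompact K)
    {w φ : X → ℝ} (hw : ContinuousOn w K) (hφ : ContinuousOn φ K) (hφpos : ∀ z ∈ K, 0 < φ z)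
    (h : ∀ γ > 0, (∀ z ∈ K, w z ≤ γ * φ z) → ∀ z ∈ K, w z < γ * φ z) : ∀ z ∈ K, w z ≤ 0 := by
  by_contra! ⟨z₀, hz₀K, hz₀⟩
  obtain ⟨z₁, hz₁K, hmax⟩ := hK.exists_isMaxOn ⟨z₀, hz₀K⟩
    (hw.div hφ fun z hz => (hφpos z hz).ne')
  have hm : 0 < w z₁ / φ z₁ := (div_pos hz₀ (hφpos z₀ hz₀K)).trans_le (hmax hz₀K)
  have := h _ hm (fun z hz => (div_le_iff₀ (hφpos z hz)).1 (hmax hz)) z₁ hz₁K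
  rw [div_mul_cancel₀ _ (hφpos z₁ hz₁K).ne'] at this
  exact this.false

theorem isCompact_setOf_le_of_le {X : Type*} [PseudoMetricSpace X] [ProperSpace X] {Ω : Set X}
    (hΩ : IsOpen Ω) (hΩb : Bornology.IsBounded Ω) {v w : X → ℝ} (hv : ContinuousOn v Ω)
    (hw : ContinuousOn w (closure Ω)) (hwb : ∀ z ∈ frontier Ω, w z ≤ 0)
    (hvw : ∀ z ∈ Ω, v z ≤ w z) {c : ℝ} (hc : 0 < c) : IsCompact {z | z ∈ Ω ∧ c ≤ v z} := by
  set S := {z | z ∈ Ω ∧ c ≤ v z}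
  have hSΩ : S ⊆ Ω := fun z hz => hz.1
  refine (hΩb.subset hSΩ).isCompact_closure.of_isClosed_subset
    (isClosed_of_closure_subset fun q (hq : q ∈ closure S) => ?_) subset_closure
  have hqΩ' : q ∈ closure Ω := closure_mono hSΩ hq
  have hwq : c ≤ w q := ContinuousWithinAt.closure_le hq continuousWithinAt_const
    ((hw q hqΩ').mono (hSΩ.trans subset_closure)) fun y hy => hy.2.trans (hvw y hy.1)
  have hqΩ : q ∈ Ω := by
    by_contra hq
    have := hwb q ⟨hqΩ', by rwa [hΩ.interior_eq]⟩
    linarith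
  exact ⟨hqΩ, ContinuousWithinAt.closure_le hq continuousWithinAt_const
    (hv.continuousAt (hΩ.mem_nhds hqΩ)).continuousWithinAt fun y hy => hy.2⟩

theorem MeasurableSet.exists_isCompact_mul_toReal_sdiff_lt {X : Type*} [TopologicalSpace X]
    [MeasurableSpace X] [OpensMeasurableSpace X] [T2Space X] {μ : Measure X}
    [μ.InnerRegularCompactLTTop] {A : Set X} (hA : MeasurableSet A) (hμA : μ A ≠ ⊤) (κ : ℝ)
    {ε : ℝ} (hε : 0 < ε) : ∃ K ⊆ A, IsCompact K ∧ κ * (μ (A \ K)).toReal < ε := by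
  obtain ⟨K, hKA, hK, hlt⟩ := hA.exists_isCompact_sdiff_lt hμA
    (ENNReal.ofReal_pos.2 (div_pos hε (by positivity : 0 < |κ| + 1))).ne'
  have ht : (μ (A \ K)).toReal < ε / (|κ| + 1) := ENNReal.toReal_lt_of_lt_ofReal hlt
  refine ⟨K, hKA, hK, ?_⟩
  calc κ * (μ (A \ K)).toReal ≤ (|κ| + 1) * (μ (A \ K)).toReal :=
        mul_le_mul_of_nonneg_right (by linarith [le_abs_self κ]) ENNReal.toReal_nonneg
    _ < ε := by rwa [lt_div_iff₀' (by positivity)] at ht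

theorem addHaar_image_le_mul_of_abs_det_le {E : Type*} [NormedAddCommGroup E] [NormedSpace ℝ E]
    [FiniteDimensional ℝ E] [MeasurableSpace E] [BorelSpace E] (μ : Measure E)
    [μ.IsAddHaarMeasure] {s : Set E} {f : E → E} {f' : E → E →L[ℝ] E} {K : ℝ}
    (hs : MeasurableSet s) (hf' : ∀ x ∈ s, HasFDerivWithinAt f (f' x) s x)
    (hK : ∀ x ∈ s, |(f' x).det| ≤ K) : μ (f '' s) ≤ ENNReal.ofReal K * μ s :=
  calc μ (f '' s) ≤ ∫⁻ x in s, ENNReal.ofReal |(f' x).det| ∂μ :=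
        addHaar_image_le_lintegral_abs_det_fderiv μ hs hf'
    _ ≤ ∫⁻ _ in s, ENNReal.ofReal K ∂μ :=
        setLIntegral_mono' hs fun x hx => ENNReal.ofReal_le_ofReal (hK x hx)
    _ = ENNReal.ofReal K * μ s := setLIntegral_const _ _

theorem volume_ball_zero_prod (r : ℝ) :
    volume (Metric.ball (0 : ℝ × ℝ) r) = ENNReal.ofReal (2 * r) * ENNReal.ofReal (2 * r) := by
  rw [← Prod.mk_zero_zero, ← ball_prod_same, Measure.volume_eq_prod, Measure.prod_prod,
    Real.volume_ball]

theorem ContinuousLinearMap.det_prod (f g : ℝ × ℝ →L[ℝ] ℝ) :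
    (f.prod g).det = f (1, 0) * g (0, 1) - f (0, 1) * g (1, 0) := by
  change LinearMap.det (f.prod g : ℝ × ℝ →ₗ[ℝ] ℝ × ℝ) = _
  rw [← LinearMap.det_toMatrix (Module.Basis.finTwoProd ℝ), Matrix.det_fin_two]
  simp [LinearMap.toMatrix_apply, Module.Basis.finTwoProd]

theorem exists_eigenpair_of_lam1_pos {T : (ℝ × ℝ → ℝ) → ℝ × ℝ → ℝ} {Ω : Set (ℝ × ℝ)}
    (h : 0 < lam1 T Ω) : ∃ lam > 0, ∃ φ : ℝ × ℝ → ℝ, ContDiffOn ℝ 2 φ Ω ∧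
      (∀ z ∈ Ω, 0 < φ z) ∧ ∀ z ∈ Ω, T φ z + lam * φ z ≤ 0 := by
  rw [lam1] at h
  obtain ⟨lam, ⟨φ, hφ⟩, hlam⟩ := exists_lt_of_lt_csSup
    (nonempty_iff_ne_empty.2 fun he => by rw [he, Real.sSup_empty] at h; exact h.false) h
  exact ⟨lam, hlam, φ, hφ⟩

def EllipticAt (a11 a12 a21 a22 : ℝ × ℝ → ℝ) (a₀ : ℝ) (z : ℝ × ℝ) : Prop :=
  ∀ ξ : ℝ × ℝ, a₀ * (ξ.1 ^ 2 + ξ.2 ^ 2) ≤ a11 z * ξ.1 ^ 2 + a12 z * ξ.1 * ξ.2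
    + a21 z * ξ.2 * ξ.1 + a22 z * ξ.2 ^ 2

/-- Negative semidefiniteness of the Hessian of `f` at `z`; only `pdx (pdy f)` enters, since the
mixed partials of a `C²` function agree (`ContDiffAt.pdx_pdy_comm`). -/
def HessNonpos (f : ℝ × ℝ → ℝ) (z : ℝ × ℝ) : Prop :=
  pdx (pdx f) z ≤ 0 ∧ pdy (pdy f) z ≤ 0 ∧ pdx (pdy f) z ^ 2 ≤ pdx (pdx f) z * pdy (pdy f) z

noncomputable def grad (f : ℝ × ℝ → ℝ) (z : ℝ × ℝ) : ℝ × ℝ := (pdx f z, pdy f z)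

/-- Pointwise relaxation of the upper contact set of the ABP method, which keeps it measurable. -/
def upperContactSet (f : ℝ × ℝ → ℝ) (D : Set (ℝ × ℝ)) (ρ : ℝ) : Set (ℝ × ℝ) :=
  {z | z ∈ D ∧ 0 < f z ∧ ‖grad f z‖ ≤ ρ ∧ HessNonpos f z}

section Operator

variable {a11 a12 a21 a22 b1 b2 c0 : ℝ × ℝ → ℝ} {a₀ : ℝ} {f g : ℝ × ℝ → ℝ} {z : ℝ × ℝ}

local notation "𝓛" => Lop a11 a12 a21 a22 b1 b2 c0

theorem EllipticAt.mul_le_mul_trace (hell : EllipticAt a11 a12 a21 a22 a₀ z) {h11 h12 h22 : ℝ}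
    (h11_nonpos : h11 ≤ 0) (h22_nonpos : h22 ≤ 0) (h12_sq : h12 ^ 2 ≤ h11 * h22) :
    a11 z * h11 + a12 z * h12 + a21 z * h12 + a22 z * h22 ≤ a₀ * (h11 + h22) := by
  -- `A - a₀ I` is positive semidefinite; pair it with the negative semidefinite `(hᵢⱼ)`
  set p := a11 z - a₀
  set q := a22 z - a₀
  set r := (a12 z + a21 z) / 2
  have hp : 0 ≤ p := by have := hell (1, 0); simp at this; linarith
  have hq : 0 ≤ q := by have := hell (0, 1); simp at this; linarith
  have hr : r ^ 2 ≤ p * q := by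
    have := sq_le_mul_of_forall_quadratic_nonpos (x := -p) (y := -r) (z := -q) fun s t => by
      have := hell (s, t); dsimp only at this; linear_combination this
    linear_combination this
  have hsq : (2 * r * h12) ^ 2 ≤ (p * -h11 + q * -h22) ^ 2 := by
    nlinarith [mul_le_mul hr h12_sq (sq_nonneg h12) (by positivity), sq_nonneg (p * h11 - q * h22)]
  linear_combination (abs_le_of_sq_le_sq' hsq (by nlinarith)).2

theorem ContDiffAt.pdx_pdy_comm (hf : ContDiffAt ℝ 2 f z) : pdx (pdy f) z = pdy (pdx f) z := by
  unfold pdx pdy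
  rw [fderiv_fderiv_apply hf.differentiableAt_fderiv,
    fderiv_fderiv_apply hf.differentiableAt_fderiv, hf.isSymmSndFDerivAt (by simp)]

theorem IsLocalMax.hessNonpos (hmax : IsLocalMax f z) (hf : ContDiffAt ℝ 2 f z) :
    HessNonpos f z := by
  set H := fderiv ℝ (fderiv ℝ f) z
  have hH : ∀ s t : ℝ, H (1, 0) (1, 0) * s ^ 2 + 2 * H (1, 0) (0, 1) * s * t
      + H (0, 1) (0, 1) * t ^ 2 ≤ 0 := by
    intro s t
    have hst : ((s, t) : ℝ × ℝ) = s • (1, 0) + t • (0, 1) := by simp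
    have := hmax.fderiv_fderiv_apply_self_nonpos hf (s, t)
    rw [hst] at this
    simp only [map_add, map_smul, add_apply, smul_apply, smul_eq_mul,
      hf.isSymmSndFDerivAt (by simp) (0, 1) (1, 0)] at this
    linear_combination this
  have hxx : pdx (pdx f) z = H (1, 0) (1, 0) := by
    unfold pdx; exact fderiv_fderiv_apply hf.differentiableAt_fderiv _ _
  have hxy : pdx (pdy f) z = H (1, 0) (0, 1) := by
    unfold pdx pdy; exact fderiv_fderiv_apply hf.differentiableAt_fderiv _ _
  have hyy : pdy (pdy f) z = H (0, 1) (0, 1) := by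
    unfold pdy; exact fderiv_fderiv_apply hf.differentiableAt_fderiv _ _
  rw [HessNonpos, hxx, hxy, hyy]
  exact ⟨by simpa using hH 1 0, by simpa using hH 0 1, sq_le_mul_of_forall_quadratic_nonpos hH⟩

theorem Lop_sub (hf : ContDiffAt ℝ 2 f z) (hg : ContDiffAt ℝ 2 g z) :
    𝓛 (fun x => f x - g x) z = 𝓛 f z - 𝓛 g z := by
  unfold Lop pdx pdy
  simp only [fderiv_fderiv_apply_sub hf hg, fderiv_apply_sub (hf.differentiableAt two_ne_zero)
    (hg.differentiableAt two_ne_zero)]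
  ring

theorem Lop_const_mul (c : ℝ) : 𝓛 (fun x => c * f x) z = c * 𝓛 f z := by
  have h (g : ℝ × ℝ → ℝ) : fderiv ℝ (fun x => c * g x) = c • fderiv ℝ g :=
    fderiv_const_smul_field c
  unfold Lop pdx pdy
  simp only [h, Pi.smul_apply, smul_apply, smul_eq_mul]
  ring

theorem mul_le_Lop_sub_mul (hf : ContDiffAt ℝ 2 f z) (hg : ContDiffAt ℝ 2 g z) {γ lam : ℝ}
    (hγ : 0 ≤ γ) (hLf : 0 ≤ 𝓛 f z) (hLg : 𝓛 g z + lam * g z ≤ 0) :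
    γ * (lam * g z) ≤ 𝓛 (fun x => f x - γ * g x) z := by
  rw [Lop_sub hf (contDiffAt_const.mul hg), Lop_const_mul]
  nlinarith

theorem Lop_le_of_hessNonpos (hf : ContDiffAt ℝ 2 f z) (hell : EllipticAt a11 a12 a21 a22 a₀ z)
    (hH : HessNonpos f z) :
    𝓛 f z ≤ a₀ * (pdx (pdx f) z + pdy (pdy f) z) + b1 z * pdx f z + b2 z * pdy f z
      + c0 z * f z := by
  have := hell.mul_le_mul_trace hH.1 hH.2.1 hH.2.2
  rw [Lop, ← hf.pdx_pdy_comm]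
  linarith

theorem IsLocalMax.Lop_le (hmax : IsLocalMax f z) (hf : ContDiffAt ℝ 2 f z)
    (hell : EllipticAt a11 a12 a21 a22 a₀ z) (ha₀ : 0 ≤ a₀) : 𝓛 f z ≤ c0 z * f z := by
  have hH := hmax.hessNonpos hf
  have := Lop_le_of_hessNonpos (b1 := b1) (b2 := b2) (c0 := c0) hf hell hH
  have hx : pdx f z = 0 := by simp [pdx, hmax.fderiv_eq_zero]
  have hy : pdy f z = 0 := by simp [pdy, hmax.fderiv_eq_zero]
  rw [hx, hy] at this
  nlinarith [mul_nonpos_of_nonneg_of_nonpos ha₀ (add_nonpos hH.1 hH.2.1)]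

variable {D Ω : Set (ℝ × ℝ)} {ρ R : ℝ}

theorem measurableSet_upperContactSet (hD : IsOpen D) (hf : ContinuousOn f D) :
    MeasurableSet (upperContactSet f D ρ) := by
  have hpdx (g : ℝ × ℝ → ℝ) : Measurable (pdx g) := measurable_fderiv_apply_const ℝ g _
  have hpdy (g : ℝ × ℝ → ℝ) : Measurable (pdy g) := measurable_fderiv_apply_const ℝ g _
  have hpos : MeasurableSet (D ∩ f ⁻¹' Ioi 0) :=
    (hf.isOpen_inter_preimage hD isOpen_Ioi).measurableSet
  have hgrad : MeasurableSet {z | ‖grad f z‖ ≤ ρ} :=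
    measurableSet_le ((hpdx f).prodMk (hpdy f)).norm measurable_const
  have hH : MeasurableSet {z | HessNonpos f z} :=
    (measurableSet_le (hpdx _) measurable_const).inter ((measurableSet_le (hpdy _)
      measurable_const).inter (measurableSet_le ((hpdx _).pow_const 2) ((hpdx _).mul (hpdy _))))
  convert hpos.inter (hgrad.inter hH) using 1
  ext z
  exact and_assoc.symm

theorem hasFDerivAt_grad (hf : ContDiffAt ℝ 2 f z) :
    HasFDerivAt (grad f) ((fderiv ℝ (pdx f) z).prod (fderiv ℝ (pdy f) z)) z := by
  have hx : DifferentiableAt ℝ (pdx f) z :=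
    hf.differentiableAt_fderiv.clm_apply (differentiableAt_const _)
  have hy : DifferentiableAt ℝ (pdy f) z :=
    hf.differentiableAt_fderiv.clm_apply (differentiableAt_const _)
  exact hx.hasFDerivAt.prodMk hy.hasFDerivAt
theorem ball_subset_image_grad_upperContactSet (hD : IsOpen D) (hf : ContDiffOn ℝ 2 f D)
    (hR : 0 < R) (hDR : D ⊆ Metric.closedBall 0 R) {zs : ℝ × ℝ} (hzs : zs ∈ D)
    (hpos : 0 < f zs) (hS : IsCompact {z | z ∈ D ∧ f zs / 2 ≤ f z}) :
    Metric.ball 0 (f zs / (8 * R)) ⊆ grad f '' upperContactSet f D (f zs / (8 * R)) := by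
  intro p hp
  rw [mem_ball_zero_iff] at hp
  -- maximize `f - L` for the linear function `L` with gradient `p`
  set L : ℝ × ℝ →L[ℝ] ℝ :=
    p.1 • ContinuousLinearMap.fst ℝ ℝ ℝ + p.2 • ContinuousLinearMap.snd ℝ ℝ ℝ
  have hL : ∀ z ∈ D, |L z| ≤ f zs / 4 := by
    intro z hz
    have hz : ‖z‖ ≤ R := mem_closedBall_zero_iff.1 (hDR hz)
    have h₁ : |p.1| * |z.1| ≤ f zs / (8 * R) * R :=
      mul_le_mul ((norm_fst_le p).trans hp.le) ((norm_fst_le z).trans hz) (abs_nonneg _)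
        (by positivity)
    have h₂ : |p.2| * |z.2| ≤ f zs / (8 * R) * R :=
      mul_le_mul ((norm_snd_le p).trans hp.le) ((norm_snd_le z).trans hz) (abs_nonneg _)
        (by positivity)
    have h₃ : f zs / (8 * R) * R = f zs / 8 := by field_simp
    calc |L z| = |p.1 * z.1 + p.2 * z.2| := by simp [L]
      _ ≤ |p.1| * |z.1| + |p.2| * |z.2| := by
        rw [← abs_mul, ← abs_mul]; exact abs_add_le _ _
      _ ≤ f zs / 4 := by linarith
  obtain ⟨zp, ⟨hzp, hzp₂⟩, hmaxp⟩ := hS.exists_isMaxOn_of_le (f := fun x => f x - L x)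
    (z₀ := zs) ((hf.continuousOn.sub L.continuous.continuousOn).mono fun _ h => h.1)
    ⟨hzs, by linarith⟩ fun z (⟨hz, hzS⟩ : z ∈ D \ _) => by
      have := (abs_le.1 (hL z hz)).1
      have := (abs_le.1 (hL zs hzs)).2
      have : f z < f zs / 2 := not_le.1 fun h => hzS ⟨hz, h⟩
      linarith
  have hlm : IsLocalMax (fun x => f x - L x) zp := hmaxp.isLocalMax (hD.mem_nhds hzp)
  have hfz : ContDiffAt ℝ 2 f zp := hf.contDiffAt (hD.mem_nhds hzp)
  have hLz : ContDiffAt ℝ 2 L zp := L.contDiff.contDiffAt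
  have hgrad : grad f zp = p := by
    have h0 := hlm.fderiv_eq_zero
    rw [fderiv_fun_sub (hfz.differentiableAt two_ne_zero) L.differentiableAt, L.fderiv,
      sub_eq_zero] at h0
    simp [grad, pdx, pdy, h0, L]
  have hH : HessNonpos f zp := by
    have hsecond (u ξ : ℝ × ℝ) : fderiv ℝ (fun y => fderiv ℝ (fun x => f x - L x) y u) zp ξ
        = fderiv ℝ (fun y => fderiv ℝ f y u) zp ξ := by
      simp [fderiv_fderiv_apply_sub hfz hLz, ContinuousLinearMap.fderiv]
    have := hlm.hessNonpos (hfz.sub hLz)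
    unfold HessNonpos pdx pdy at this ⊢
    simpa only [hsecond] using this
  exact ⟨zp, ⟨hzp, by linarith, hgrad ▸ hp.le, hH⟩, hgrad⟩

theorem abs_det_fderiv_grad_le (hz : z ∈ upperContactSet f D ρ) (hf : ContDiffAt ℝ 2 f z)
    (hell : EllipticAt a11 a12 a21 a22 a₀ z) (ha₀ : 0 < a₀)
    {B C M : ℝ} (hb1 : |b1 z| ≤ B) (hb2 : |b2 z| ≤ B) (hc : |c0 z| ≤ C) (hM : f z ≤ M)
    (hLf : 0 ≤ 𝓛 f z) :
    |((fderiv ℝ (pdx f) z).prod (fderiv ℝ (pdy f) z)).det|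
      ≤ ((2 * B * ρ + C * M) / (2 * a₀)) ^ 2 := by
  obtain ⟨-, hpos, hgrad, hxx, hyy, hxy⟩ := hz
  have hdet : ((fderiv ℝ (pdx f) z).prod (fderiv ℝ (pdy f) z)).det
      = pdx (pdx f) z * pdy (pdy f) z - pdx (pdy f) z ^ 2 := by
    rw [ContinuousLinearMap.det_prod]
    change pdx (pdx f) z * pdy (pdy f) z - pdy (pdx f) z * pdx (pdy f) z = _
    rw [← hf.pdx_pdy_comm]; ring
  have hb : b1 z * pdx f z + b2 z * pdy f z ≤ 2 * B * ρ := by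
    have h₁ := abs_mul (b1 z) (pdx f z) ▸ mul_le_mul hb1 ((norm_fst_le (grad f z)).trans hgrad)
      (abs_nonneg _) ((abs_nonneg _).trans hb1)
    have h₂ := abs_mul (b2 z) (pdy f z) ▸ mul_le_mul hb2 ((norm_snd_le (grad f z)).trans hgrad)
      (abs_nonneg _) ((abs_nonneg _).trans hb2)
    linarith [le_abs_self (b1 z * pdx f z), le_abs_self (b2 z * pdy f z)]
  have hc' : c0 z * f z ≤ C * M :=
    calc c0 z * f z ≤ |c0 z| * f z := mul_le_mul_of_nonneg_right (le_abs_self _) hpos.le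
      _ ≤ C * M := mul_le_mul hc hM hpos.le ((abs_nonneg _).trans hc)
  have htr : a₀ * -(pdx (pdx f) z + pdy (pdy f) z) ≤ 2 * B * ρ + C * M := by
    have := Lop_le_of_hessNonpos (b1 := b1) (b2 := b2) (c0 := c0) hf hell ⟨hxx, hyy, hxy⟩
    linarith
  have htr' : -(pdx (pdx f) z + pdy (pdy f) z) / 2 ≤ (2 * B * ρ + C * M) / (2 * a₀) := by
    rw [div_le_div_iff₀ two_pos (by positivity)]; linarith
  rw [hdet, abs_of_nonneg (by linarith)]
  nlinarith [pow_le_pow_left₀ (by linarith) htr' 2, sq_nonneg (pdx (pdx f) z - pdy (pdy f) z)]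

/-- Aleksandrov–Bakelman–Pucci estimate on domains of small measure: a subsolution whose positive
superlevel sets stay away from the boundary is nonpositive. -/
theorem nonpos_of_volume_lt (hD : IsOpen D) (hR : 0 < R) (hDR : D ⊆ Metric.closedBall 0 R)
    (hell : ∀ z ∈ D, EllipticAt a11 a12 a21 a22 a₀ z) (ha₀ : 0 < a₀)
    {B C : ℝ} (hb1 : ∀ z ∈ D, |b1 z| ≤ B) (hb2 : ∀ z ∈ D, |b2 z| ≤ B)
    (hc : ∀ z ∈ D, |c0 z| ≤ C) (hsmall : (B + 4 * R * C) ^ 2 * (volume D).toReal < 4 * a₀ ^ 2)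
    {v : ℝ × ℝ → ℝ} (hv : ContDiffOn ℝ 2 v D) (hLv : ∀ z ∈ D, 0 ≤ 𝓛 v z)
    (hcpt : ∀ c > 0, IsCompact {z | z ∈ D ∧ c ≤ v z}) :
    ∀ z ∈ D, v z ≤ 0 := by
  intro z₀ hz₀
  by_contra! hpos
  obtain ⟨zs, ⟨hzs, hzs₀⟩, hmax⟩ := (hcpt _ hpos).exists_isMaxOn_of_le
    (hv.continuousOn.mono fun _ h => h.1) ⟨hz₀, le_rfl⟩
    fun z (⟨hz, hzS⟩ : z ∈ D \ _) => (not_le.1 fun h => hzS ⟨hz, h⟩).le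
  set M := v zs
  have hM : 0 < M := hpos.trans_le hzs₀
  set ρ := M / (8 * R)
  set k := (2 * B * ρ + C * M) / (2 * a₀)
  set E := upperContactSet v D ρ
  have hvE : ∀ z ∈ E, ContDiffAt ℝ 2 v z := fun z hz => hv.contDiffAt (hD.mem_nhds hz.1)
  have hvol : volume (Metric.ball (0 : ℝ × ℝ) ρ) ≤ ENNReal.ofReal (k ^ 2) * volume D :=
    calc volume (Metric.ball (0 : ℝ × ℝ) ρ) ≤ volume (grad v '' E) :=
          measure_mono (ball_subset_image_grad_upperContactSet hD hv hR hDR hzs hM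
            (hcpt _ (by positivity)))
      _ ≤ ENNReal.ofReal (k ^ 2) * volume E :=
          addHaar_image_le_mul_of_abs_det_le volume
            (measurableSet_upperContactSet hD hv.continuousOn)
            (fun z hz => (hasFDerivAt_grad (hvE z hz)).hasFDerivWithinAt)
            fun z hz => abs_det_fderiv_grad_le hz (hvE z hz) (hell z hz.1) ha₀ (hb1 z hz.1)
              (hb2 z hz.1) (hc z hz.1) (hmax hz.1) (hLv z hz.1)
      _ ≤ ENNReal.ofReal (k ^ 2) * volume D := by
          gcongr; exact fun z hz => hz.1
  have hDfin : volume D ≠ ⊤ := (measure_mono hDR).trans_lt measure_closedBall_lt_top |>.ne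
  rw [volume_ball_zero_prod, ← ENNReal.ofReal_mul (by positivity), ← ENNReal.ofReal_toReal hDfin,
    ← ENNReal.ofReal_mul (by positivity), ENNReal.ofReal_le_ofReal_iff (by positivity)] at hvol
  -- `hvol` reads `4ρ² ≤ (ρ (B + 4RC) / a₀)² |D|`
  have hk : k = ρ * (B + 4 * R * C) / a₀ := by
    simp only [k, ρ]; field_simp; ring
  have hρ : 0 < ρ ^ 2 := by positivity
  have : ρ ^ 2 * (4 * a₀ ^ 2) ≤ ρ ^ 2 * ((B + 4 * R * C) ^ 2 * (volume D).toReal) := by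
    rw [hk, div_pow, div_mul_eq_mul_div, le_div_iff₀ (by positivity)] at hvol
    linear_combination hvol
  exact (le_of_mul_le_mul_left this hρ).not_gt hsmall

theorem nonpos_of_nonpos_on_isCompact (hΩ : IsOpen Ω) (hR : 0 < R)
    (hΩR : Ω ⊆ Metric.closedBall 0 R)
    (hell : ∀ z ∈ Ω, EllipticAt a11 a12 a21 a22 a₀ z) (ha₀ : 0 < a₀)
    {B C : ℝ} (hb1 : ∀ z ∈ Ω, |b1 z| ≤ B) (hb2 : ∀ z ∈ Ω, |b2 z| ≤ B)
    (hc : ∀ z ∈ Ω, |c0 z| ≤ C) {K : Set (ℝ × ℝ)} (hK : IsCompact K)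
    (hsmall : (B + 4 * R * C) ^ 2 * (volume (Ω \ K)).toReal < 4 * a₀ ^ 2)
    {v w : ℝ × ℝ → ℝ} (hv : ContDiffOn ℝ 2 v Ω) (hLv : ∀ z ∈ Ω, 0 ≤ 𝓛 v z)
    (hw : ContinuousOn w (closure Ω)) (hwb : ∀ z ∈ frontier Ω, w z ≤ 0)
    (hvw : ∀ z ∈ Ω, v z ≤ w z) (hvK : ∀ z ∈ K, v z ≤ 0) : ∀ z ∈ Ω, v z ≤ 0 := by
  have hcpt : ∀ c > 0, IsCompact {z | z ∈ Ω \ K ∧ c ≤ v z} := fun c hc => by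
    have hset : {z | z ∈ Ω \ K ∧ c ≤ v z} = {z | z ∈ Ω ∧ c ≤ v z} := by
      ext z
      exact ⟨fun h => ⟨h.1.1, h.2⟩,
        fun h => ⟨⟨h.1, fun hzK => (hvK z hzK).not_gt (hc.trans_le h.2)⟩, h.2⟩⟩
    rw [hset]
    exact isCompact_setOf_le_of_le hΩ (Metric.isBounded_closedBall.subset hΩR) hv.continuousOn hw
      hwb hvw hc
  have hD := nonpos_of_volume_lt (hΩ.sdiff hK.isClosed) hR (sdiff_subset.trans hΩR)
    (fun z hz => hell z hz.1) ha₀ (fun z hz => hb1 z hz.1) (fun z hz => hb2 z hz.1)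
    (fun z hz => hc z hz.1) hsmall (hv.mono sdiff_subset) (fun z hz => hLv z hz.1) hcpt
  intro z hz
  by_cases hzK : z ∈ K
  · exact hvK z hzK
  · exact hD z ⟨hz, hzK⟩

theorem neg_of_nonpos_of_Lop_pos (hΩ : IsOpen Ω)
    (hell : ∀ z ∈ Ω, EllipticAt a11 a12 a21 a22 a₀ z) (ha₀ : 0 ≤ a₀)
    {u : ℝ × ℝ → ℝ} (hu : ContDiffOn ℝ 2 u Ω) (hu0 : ∀ z ∈ Ω, u z ≤ 0)
    (hLu : ∀ z ∈ Ω, 0 < 𝓛 u z) : ∀ z ∈ Ω, u z < 0 := by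
  intro z hz
  refine (hu0 z hz).lt_of_ne fun hz0 => ?_
  have hmax : IsLocalMax u z :=
    Filter.mem_of_superset (hΩ.mem_nhds hz) fun y hy => (hu0 y hy).trans hz0.ge
  have := hmax.Lop_le (b1 := b1) (b2 := b2) (c0 := c0) (hu.contDiffAt (hΩ.mem_nhds hz))
    (hell z hz) ha₀
  rw [hz0, mul_zero] at this
  exact (hLu z hz).not_ge this

end Operator

theorem positive_principal_eigenvalue_implies_maximum_principle_general
    (Ω : Set (ℝ × ℝ)) (hΩopen : IsOpen Ω)
    (hΩbdd : Bornology.IsBounded Ω)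
    (a11 a12 a21 a22 b1 b2 c0 : ℝ × ℝ → ℝ)
    (hcoeff : ∀ f ∈ ({a11, a12, a21, a22, b1, b2, c0} : Set (ℝ × ℝ → ℝ)),
      ContinuousOn f Ω ∧ ∃ C, ∀ z ∈ Ω, |f z| ≤ C)
    (a₀ : ℝ) (ha₀pos : 0 < a₀)
    (hell : ∀ z ∈ Ω, ∀ ξ : ℝ × ℝ,
      a₀ * (ξ.1 ^ 2 + ξ.2 ^ 2) ≤ a11 z * ξ.1 ^ 2 + a12 z * ξ.1 * ξ.2
        + a21 z * ξ.2 * ξ.1 + a22 z * ξ.2 ^ 2)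
    (hlam1pos : 0 < lam1 (Lop a11 a12 a21 a22 b1 b2 c0) Ω)
    (w : ℝ × ℝ → ℝ)
    (hw2 : ContDiffOn ℝ 2 w Ω) (hwcont : ContinuousOn w (closure Ω))
    (hsuper : ∀ z ∈ Ω, 0 ≤ Lop a11 a12 a21 a22 b1 b2 c0 w z)
    (hwbd : ∀ z ∈ frontier Ω, w z ≤ 0) :
    ∀ z ∈ Ω, w z ≤ 0 := by
  obtain ⟨lam, hlam, φ, hφ, hφpos, hφeig⟩ := exists_eigenpair_of_lam1_pos hlam1pos
  obtain ⟨-, B₁, hB₁⟩ := hcoeff b1 (by simp)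
  obtain ⟨-, B₂, hB₂⟩ := hcoeff b2 (by simp)
  obtain ⟨-, C, hC⟩ := hcoeff c0 (by simp)
  obtain ⟨R, hR, hΩR⟩ := hΩbdd.subset_closedBall_lt 0 0
  obtain ⟨K, hKΩ, hK, hsmall⟩ := hΩopen.measurableSet.exists_isCompact_mul_toReal_sdiff_lt
    (μ := volume) ((measure_mono hΩR).trans_lt measure_closedBall_lt_top).ne
    ((max B₁ B₂ + 4 * R * C) ^ 2) (by positivity : 0 < 4 * a₀ ^ 2)
  have hv (γ : ℝ) : ContDiffOn ℝ 2 (fun x => w x - γ * φ x) Ω := hw2.sub (contDiffOn_const.mul hφ)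
  have hLv (γ : ℝ) (hγ : 0 ≤ γ) (z : ℝ × ℝ) (hz : z ∈ Ω) :=
    mul_le_Lop_sub_mul (hw2.contDiffAt (hΩopen.mem_nhds hz)) (hφ.contDiffAt (hΩopen.mem_nhds hz))
      hγ (hsuper z hz) (hφeig z hz)
  have hcmp (γ : ℝ) (hγ : 0 ≤ γ) (hwK : ∀ z ∈ K, w z ≤ γ * φ z) :
      ∀ z ∈ Ω, w z - γ * φ z ≤ 0 :=
    nonpos_of_nonpos_on_isCompact hΩopen hR hΩR hell ha₀pos
      (fun z hz => (hB₁ z hz).trans (le_max_left _ _))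
      (fun z hz => (hB₂ z hz).trans (le_max_right _ _)) hC hK hsmall (hv γ)
      (fun z hz => (hLv γ hγ z hz).trans' (by have := hφpos z hz; positivity)) hwcont hwbd
      (fun z hz => by nlinarith [hφpos z hz]) fun z hz => by linarith [hwK z hz]
  have hwK := nonpos_of_forall_lt_mul hK (hwcont.mono (hKΩ.trans subset_closure))
    (hφ.continuousOn.mono hKΩ) (fun z hz => hφpos z (hKΩ hz)) fun γ hγ hwγ z hz =>
      sub_neg.1 <| neg_of_nonpos_of_Lop_pos hΩopen hell ha₀pos.le (hv γ) (hcmp γ hγ.le hwγ)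
        (fun z hz => (hLv γ hγ.le z hz).trans_lt' (by have := hφpos z hz; positivity)) z (hKΩ hz)
  simpa using hcmp 0 le_rfl (by simpa using hwK)

/-- Positivity of the principal eigenvalue implies the weak maximum principle:
if `λ₁(𝓛, Ω) > 0`, `𝓛w ≥ 0` in `Ω` and `w ≤ 0` on `∂Ω`, then `w ≤ 0` in `Ω`. -/
theorem positive_principal_eigenvalue_implies_maximum_principle
    (Ω : Set (ℝ × ℝ)) (hΩopen : IsOpen Ω) (hΩconn : IsConnected Ω)
    (hΩbdd : Bornology.IsBounded Ω)
    (a11 a12 a21 a22 b1 b2 c0 : ℝ × ℝ → ℝ)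
    (hcoeff : ∀ f ∈ ({a11, a12, a21, a22, b1, b2, c0} : Set (ℝ × ℝ → ℝ)),
      ContinuousOn f Ω ∧ ∃ C, ∀ z ∈ Ω, |f z| ≤ C)
    (a₀ : ℝ) (ha₀pos : 0 < a₀)
    (hell : ∀ z ∈ Ω, ∀ ξ : ℝ × ℝ,
      a₀ * (ξ.1 ^ 2 + ξ.2 ^ 2) ≤ a11 z * ξ.1 ^ 2 + a12 z * ξ.1 * ξ.2
        + a21 z * ξ.2 * ξ.1 + a22 z * ξ.2 ^ 2)
    (hlam1pos : 0 < lam1 (Lop a11 a12 a21 a22 b1 b2 c0) Ω)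
    (w : ℝ × ℝ → ℝ)
    (hw2 : ContDiffOn ℝ 2 w Ω) (hwcont : ContinuousOn w (closure Ω))
    (hsuper : ∀ z ∈ Ω, 0 ≤ Lop a11 a12 a21 a22 b1 b2 c0 w z)
    (hwbd : ∀ z ∈ frontier Ω, w z ≤ 0) :
    ∀ z ∈ Ω, w z ≤ 0 :=
  positive_principal_eigenvalue_implies_maximum_principle_general Ω hΩopen hΩbdd a11 a12 a21 a22 b1
    b2 c0 hcoeff a₀ ha₀pos hell hlam1pos w hw2 hwcont hsuper hwbd
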